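/- arXiv:2501.07698 — 2 statements merged into one kernel-verified Lean document; each statement's English description precedes it below -/
import Mathlib

section
/- The rational circle graph 𝒞_ℚ is vertex-transitive: for any two vertices u, v of 𝒞_ℚ there is an automorphism of 𝒞_ℚ mapping u to v. -/
noncomputable section

/-- The unit circle in the complex plane. -/
def S1 : Set ℂ := {z : ℂ | ‖z‖ = 1}

/-- The closed segment in the plane spanned by an unordered pair of points. -/
def chordSegment : Sym2 ℂ → Set ℂ :=
  Sym2.lift ⟨fun a b => segment ℝ a b, fun a b => segment_symm ℝ a b⟩

/-- The rational points of the circle: the points `exp (2 π i q)` for `q : ℚ`. -/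
def Q1 : Set ℂ := {z : ℂ | ∃ q : ℚ, z = Complex.exp (2 * Real.pi * Complex.I * q)}

/-- A rational chord: an unordered pair of two distinct rational points of the circle. -/
def ChordQ : Type := {p : Sym2 ℂ // (∀ z ∈ p, z ∈ Q1) ∧ ¬ p.IsDiag}

/-- The rational circle graph: vertices are the rational chords, two distinct chords
being adjacent whenever their segments intersect. -/
def RationalCircleGraph : SimpleGraph ChordQ where
  Adj C D := C ≠ D ∧ (chordSegment C.1 ∩ chordSegment D.1).Nonempty
  symm := ⟨fun C D ⟨h1, h2⟩ => ⟨h1.symm, by rwa [Set.inter_comm]⟩⟩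
  loopless := ⟨fun C h => h.1 rfl⟩

/-!
Put the endpoints of two rational chords at angles `x, y` and `s, t` in a common half-open interval
of length one. By a product-of-sines formula for the orientation determinant of three points of
the circle, the chords meet iff `{s, t}` interlaces `{x, y}`, i.e.
`(s - x) (s - y) (t - x) (t - y) ≤ 0`. This condition only sees the order of the angles, so any
increasing bijection `φ` of `ℚ` with `φ (r + n) = φ r + n` induces, through
`exp (2πiq) ↦ exp (2πiφ(q))`, an automorphism of the graph. Every chord has angles
`x < y < x + 1`, and a suitable `φ`, piecewise linear on each period, sends them to those of any
other chord.
-/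

open Complex Real Set

def circlePoint (t : ℝ) : ℂ := exp (2 * π * I * t)

lemma circlePoint_re (t : ℝ) : (circlePoint t).re = Real.cos (2 * π * t) := by
  rw [circlePoint, show 2 * π * I * t = ((2 * π * t : ℝ) : ℂ) * I by push_cast; ring]
  exact exp_ofReal_mul_I_re _

lemma circlePoint_im (t : ℝ) : (circlePoint t).im = Real.sin (2 * π * t) := by
  rw [circlePoint, show 2 * π * I * t = ((2 * π * t : ℝ) : ℂ) * I by push_cast; ring]
  exact exp_ofReal_mul_I_im _

lemma circlePoint_eq_circlePoint_iff {s t : ℝ} :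
    circlePoint s = circlePoint t ↔ ∃ n : ℤ, s = t + n := by
  rw [circlePoint, circlePoint, exp_eq_exp_iff_exists_int]
  refine exists_congr fun n => ⟨fun h => ?_, fun h => by rw [h]; push_cast; ring⟩
  have h2πI : 2 * π * I ≠ 0 := by simp [Real.pi_ne_zero]
  have : 2 * π * I * s = 2 * π * I * ((t + n : ℝ) : ℂ) := by rw [h]; push_cast; ring
  exact_mod_cast mul_left_cancel₀ h2πI this

lemma circlePoint_add_intCast (t : ℝ) (n : ℤ) : circlePoint (t + n) = circlePoint t :=
  circlePoint_eq_circlePoint_iff.2 ⟨n, rfl⟩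

lemma circlePoint_ratCast_fract (q : ℚ) : circlePoint (Int.fract q : ℚ) = circlePoint q := by
  rw [← circlePoint_add_intCast _ ⌊q⌋, ← Rat.cast_intCast, ← Rat.cast_add,
    Int.fract_add_floor]

lemma mem_Q1_iff {z : ℂ} : z ∈ Q1 ↔ ∃ q : ℚ, circlePoint q = z := by
  simp only [Q1, circlePoint, ofReal_ratCast, mem_ofPred_eq, eq_comm]

lemma circlePoint_injOn (c : ℝ) : InjOn circlePoint (Ico c (c + 1)) := by
  intro s hs t ht h
  obtain ⟨n, hn⟩ := circlePoint_eq_circlePoint_iff.1 h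
  have : |(n : ℝ)| < 1 := by rw [abs_lt]; constructor <;> linarith [hs.1, hs.2, ht.1, ht.2]
  obtain rfl := Int.abs_lt_one_iff.1 (by exact_mod_cast this)
  simpa using hn

/-- Twice the signed area of the triangle `a b c`. -/
def orient (a b c : ℂ) : ℝ := (b - a).re * (c - a).im - (b - a).im * (c - a).re

lemma orient_add_smul {a b c d : ℂ} {r s : ℝ} (h : r + s = 1) :
    orient a b (r • c + s • d) = r * orient a b c + s * orient a b d := by
  simp only [orient, add_re, add_im, sub_re, sub_im, smul_re, smul_im, smul_eq_mul]
  linear_combination ((b.re - a.re) * a.im - (b.im - a.im) * a.re) * h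

lemma orient_eq_zero_of_mem_segment {a b p : ℂ} (hp : p ∈ segment ℝ a b) :
    orient a b p = 0 := by
  obtain ⟨r, s, -, -, hrs, rfl⟩ := hp
  rw [orient_add_smul hrs]
  simp only [orient, sub_self, zero_re, zero_im]
  ring

lemma exists_eq_smul_add_smul_of_orient_eq_zero {a b p : ℂ} (hab : a ≠ b)
    (h : orient a b p = 0) :
    ∃ r : ℝ, p = (1 - r) • a + r • b := by
  set w := b - a
  have hw : w.re * w.re + w.im * w.im ≠ 0 := by
    rw [← normSq_apply]; exact (normSq_pos.2 (sub_ne_zero.2 hab.symm)).ne'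
  replace h : w.re * (p - a).im - w.im * (p - a).re = 0 := h
  set r := ((p - a).re * w.re + (p - a).im * w.im) / (w.re * w.re + w.im * w.im)
  have hre : r * w.re = (p - a).re := by
    rw [div_mul_eq_mul_div, div_eq_iff hw]; linear_combination w.im * h
  have him : r * w.im = (p - a).im := by
    rw [div_mul_eq_mul_div, div_eq_iff hw]; linear_combination -w.re * h
  refine ⟨r, Complex.ext ?_ ?_⟩
  · simp only [add_re, smul_re, smul_eq_mul, sub_re, w] at hre ⊢; linarith
  · simp only [add_im, smul_im, smul_eq_mul, sub_im, w] at him ⊢; linarith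

lemma mem_Icc_of_mul_neg_of_add_eq_zero {K : Type*} [CommRing K] [LinearOrder K]
    [IsStrictOrderedRing K] {M N r : K} (hMN : M * N < 0) (h : (1 - r) * M + r * N = 0) :
    r ∈ Icc 0 1 := by
  have hM : (1 - r) * M ^ 2 + r * (M * N) = 0 := by linear_combination M * h
  have hN : (1 - r) * (M * N) + r * N ^ 2 = 0 := by linear_combination N * h
  constructor
  · by_contra! hr
    nlinarith [mul_pos_of_neg_of_neg hr hMN, sq_nonneg M]
  · by_contra! hr
    nlinarith [mul_pos_of_neg_of_neg (sub_neg.2 hr) hMN, sq_nonneg N]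

lemma disjoint_segment_of_orient_mul_pos {a b c d : ℂ} (h : 0 < orient a b c * orient a b d) :
    Disjoint (segment ℝ a b) (segment ℝ c d) := by
  rw [Set.disjoint_left]
  rintro _ hab ⟨r, s, hr, hs, hrs, rfl⟩
  have := orient_eq_zero_of_mem_segment hab
  rw [orient_add_smul hrs] at this
  set L := orient a b c
  set N := orient a b d
  have key : r * L ^ 2 + s * N ^ 2 + L * N = 0 := by
    linear_combination (L + N) * this - (L * N) * hrs
  nlinarith [mul_nonneg hr (sq_nonneg L), mul_nonneg hs (sq_nonneg N)]

lemma segment_inter_nonempty_of_orient_mul_neg {a b c d : ℂ} (hab : a ≠ b)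
    (h₁ : orient a b c * orient a b d < 0) (h₂ : orient c d a * orient c d b < 0) :
    (segment ℝ a b ∩ segment ℝ c d).Nonempty := by
  set L := orient a b c
  set N := orient a b d
  have hLN : L - N ≠ 0 := fun h => by
    rw [sub_eq_zero.1 h] at h₁; exact (mul_self_nonneg N).not_gt h₁
  set τ := L / (L - N)
  have hτ : (1 - τ) * L + τ * N = 0 := by simp only [τ]; field_simp; ring
  obtain ⟨hτ0, hτ1⟩ := mem_Icc_of_mul_neg_of_add_eq_zero h₁ hτ
  set p := (1 - τ) • c + τ • d
  have hp : p ∈ segment ℝ c d := ⟨1 - τ, τ, by linarith, hτ0, by ring, rfl⟩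
  obtain ⟨r, hr⟩ := exists_eq_smul_add_smul_of_orient_eq_zero hab
    (by rw [orient_add_smul (by ring), hτ] : orient a b p = 0)
  have hr' : (1 - r) * orient c d a + r * orient c d b = 0 := by
    rw [← orient_add_smul (by ring), ← hr, orient_eq_zero_of_mem_segment hp]
  obtain ⟨hr0, hr1⟩ := mem_Icc_of_mul_neg_of_add_eq_zero h₂ hr'
  exact ⟨p, ⟨1 - r, r, by linarith, hr0, by ring, hr.symm⟩, hp⟩

lemma orient_circlePoint (x y z : ℝ) :
    orient (circlePoint x) (circlePoint y) (circlePoint z) =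
      4 * Real.sin (π * (y - x)) * Real.sin (π * (z - y)) * Real.sin (π * (z - x)) := by
  have h2 : ∀ t : ℝ, 2 * π * t = 2 * (π * t) := fun t => by ring
  have hs : ∀ a b : ℝ, π * (a - b) = π * a - π * b := fun a b => by ring
  simp only [orient, sub_re, sub_im, circlePoint_re, circlePoint_im, h2, hs,
    Real.sin_two_mul, Real.cos_two_mul', Real.sin_sub]
  set sx := Real.sin (π * x); set cx := Real.cos (π * x)
  set sy := Real.sin (π * y); set cy := Real.cos (π * y)
  set sz := Real.sin (π * z); set cz := Real.cos (π * z)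
  have px : sx ^ 2 + cx ^ 2 = 1 := Real.sin_sq_add_cos_sq _
  have py : sy ^ 2 + cy ^ 2 = 1 := Real.sin_sq_add_cos_sq _
  have pz : sz ^ 2 + cz ^ 2 = 1 := Real.sin_sq_add_cos_sq _
  linear_combination (2*sz*cz - 2*sy*cy - 4*cy^2*sz*cz + 4*sy*cy*cz^2) * px +
    (-2*sz*cz + 2*sx*cx + 4*cx^2*sz*cz - 4*sx*cx*cz^2) * py +
    (2*sy*cy - 2*sx*cx - 4*cx^2*sy*cy + 4*sx*cx*cy^2) * pz

lemma sign_sin_pi_mul {d : ℝ} (hd : |d| < 1) :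
    SignType.sign (Real.sin (π * d)) = SignType.sign d := by
  obtain ⟨hd₁, hd₂⟩ := abs_lt.1 hd
  have hπ := Real.pi_pos
  rcases lt_trichotomy d 0 with h | rfl | h
  · rw [sign_neg h, sign_neg (Real.sin_neg_of_neg_of_neg_pi_lt (by nlinarith) (by nlinarith))]
  · simp
  · rw [sign_pos h, sign_pos (Real.sin_pos_of_pos_of_lt_pi (by positivity) (by nlinarith))]

section Ico

variable {c x y z w : ℝ}

lemma abs_sub_lt_one_of_mem_Ico (hx : x ∈ Ico c (c + 1)) (hy : y ∈ Ico c (c + 1)) :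
    |x - y| < 1 :=
  abs_sub_lt_iff.2 ⟨by linarith [hx.2, hy.1], by linarith [hx.1, hy.2]⟩

lemma sign_orient_circlePoint (hx : x ∈ Ico c (c + 1)) (hy : y ∈ Ico c (c + 1))
    (hz : z ∈ Ico c (c + 1)) :
    SignType.sign (orient (circlePoint x) (circlePoint y) (circlePoint z)) =
      SignType.sign ((y - x) * (z - y) * (z - x)) := by
  simp only [orient_circlePoint, sign_mul, sign_sin_pi_mul (abs_sub_lt_one_of_mem_Ico hy hx),
    sign_sin_pi_mul (abs_sub_lt_one_of_mem_Ico hz hy),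
    sign_sin_pi_mul (abs_sub_lt_one_of_mem_Ico hz hx), sign_pos (four_pos : (0 : ℝ) < 4), one_mul]

lemma sign_orient_circlePoint_mul (hx : x ∈ Ico c (c + 1)) (hy : y ∈ Ico c (c + 1))
    (hz : z ∈ Ico c (c + 1)) (hw : w ∈ Ico c (c + 1)) (hxy : x ≠ y) :
    SignType.sign (orient (circlePoint x) (circlePoint y) (circlePoint z) *
      orient (circlePoint x) (circlePoint y) (circlePoint w)) =
      SignType.sign ((z - x) * (z - y) * (w - x) * (w - y)) := by
  rw [sign_mul, sign_orient_circlePoint hx hy hz, sign_orient_circlePoint hx hy hw, ← sign_mul,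
    show (y - x) * (z - y) * (z - x) * ((y - x) * (w - y) * (w - x)) =
      (y - x) ^ 2 * ((z - x) * (z - y) * (w - x) * (w - y)) by ring,
    sign_mul, sign_pos (sq_pos_of_ne_zero (sub_ne_zero.2 hxy.symm)), one_mul]

end Ico

/-- Since `(s - x) * (s - y) ≤ 0` says that `s` lies between `x` and `y`, this says that
`s` and `t` are separated by `{x, y}` or share a point with it. -/
def Interlaced {α : Type*} [Ring α] [LE α] (x y s t : α) : Prop :=
  (s - x) * (s - y) * (t - x) * (t - y) ≤ 0

lemma StrictMono.interlaced_iff {α β : Type*} [CommRing α] [LinearOrder α]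
    [IsStrictOrderedRing α] [CommRing β] [LinearOrder β] [IsStrictOrderedRing β] {f : α → β}
    (hf : StrictMono f) {x y s t : α} :
    Interlaced (f x) (f y) (f s) (f t) ↔ Interlaced x y s t := by
  have hsign : ∀ a b, SignType.sign (f a - f b) = SignType.sign (a - b) := fun a b => by
    rcases lt_trichotomy a b with h | rfl | h
    · rw [sign_neg (sub_neg.2 h), sign_neg (sub_neg.2 (hf h))]
    · simp
    · rw [sign_pos (sub_pos.2 h), sign_pos (sub_pos.2 (hf h))]
  rw [Interlaced, Interlaced, ← sign_nonpos_iff (α := β), ← sign_nonpos_iff (α := α)]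
  simp only [sign_mul, hsign]

theorem segment_circlePoint_inter_nonempty_iff {c x y s t : ℝ} (hx : x ∈ Ico c (c + 1))
    (hy : y ∈ Ico c (c + 1)) (hs : s ∈ Ico c (c + 1)) (ht : t ∈ Ico c (c + 1))
    (hxy : x ≠ y) (hst : s ≠ t) :
    (segment ℝ (circlePoint x) (circlePoint y) ∩
      segment ℝ (circlePoint s) (circlePoint t)).Nonempty ↔ Interlaced x y s t := by
  have h₁ := sign_orient_circlePoint_mul hx hy hs ht hxy
  have h₂ := sign_orient_circlePoint_mul hs ht hx hy hst
  rw [show (x - s) * (x - t) * (y - s) * (y - t) = (s - x) * (s - y) * (t - x) * (t - y) by ring]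
    at h₂
  rw [Interlaced]
  rcases lt_trichotomy ((s - x) * (s - y) * (t - x) * (t - y)) 0 with hP | hP | hP
  · rw [sign_neg hP, sign_eq_neg_one_iff] at h₁ h₂
    exact iff_of_true (segment_inter_nonempty_of_orient_mul_neg
      ((circlePoint_injOn c).ne hx hy hxy) h₁ h₂) hP.le
  · refine iff_of_true ?_ hP.le
    simp only [mul_eq_zero, sub_eq_zero] at hP
    rcases hP with ((rfl | rfl) | rfl) | rfl
    exacts [⟨_, left_mem_segment .., left_mem_segment ..⟩,
      ⟨_, right_mem_segment .., left_mem_segment ..⟩,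
      ⟨_, left_mem_segment .., right_mem_segment ..⟩,
      ⟨_, right_mem_segment .., right_mem_segment ..⟩]
  · rw [sign_pos hP, sign_eq_one_iff] at h₁
    exact iff_of_false (not_disjoint_iff_nonempty_inter.not_right.1
      (disjoint_segment_of_orient_mul_pos h₁)) hP.not_ge

def IsDegreeOneLift {K : Type*} [Add K] [IntCast K] (φ : K → K) : Prop :=
  ∀ (r : K) (n : ℤ), φ (r + n) = φ r + n

section PiecewiseLinear

variable {K : Type*} [Field K] [LinearOrder K] {a b : K}

/-- The piecewise-linear map with nodes `(0, 0)`, `(a, b)` and `(1, 1)`. -/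
def pwLinear (a b r : K) : K :=
  if r ≤ a then r * (b / a) else b + (r - a) * ((1 - b) / (1 - a))

lemma pwLinear_zero (ha : a ∈ Ioo 0 1) : pwLinear a b 0 = 0 := by
  simp [pwLinear, ha.1.le]

lemma pwLinear_self (ha : a ∈ Ioo 0 1) : pwLinear a b a = b := by
  simp [pwLinear, mul_div_cancel₀ b ha.1.ne']

lemma pwLinear_one (ha : a ∈ Ioo 0 1) : pwLinear a b 1 = 1 := by
  have : 1 - a ≠ 0 := sub_ne_zero.2 ha.2.ne'
  simp only [pwLinear, if_neg ha.2.not_ge]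
  field_simp
  ring

variable [IsStrictOrderedRing K]

lemma strictMono_pwLinear (ha : a ∈ Ioo 0 1) (hb : b ∈ Ioo 0 1) :
    StrictMono (pwLinear a b) := by
  intro r s hrs
  have hba : 0 < b / a := div_pos hb.1 ha.1
  have hba' : 0 < (1 - b) / (1 - a) := div_pos (sub_pos.2 hb.2) (sub_pos.2 ha.2)
  have hab : a * (b / a) = b := mul_div_cancel₀ b ha.1.ne'
  unfold pwLinear
  split_ifs with hr hs hs
  · exact mul_lt_mul_of_pos_right hrs hba
  · nlinarith [mul_le_mul_of_nonneg_right hr hba.le]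
  · linarith
  · nlinarith [mul_lt_mul_of_pos_right (sub_lt_sub_right hrs a) hba']

lemma pwLinear_pwLinear (ha : a ∈ Ioo 0 1) (hb : b ∈ Ioo 0 1) (r : K) :
    pwLinear b a (pwLinear a b r) = r := by
  have h1a : 1 - a ≠ 0 := sub_ne_zero.2 ha.2.ne'
  have h1b : 1 - b ≠ 0 := sub_ne_zero.2 hb.2.ne'
  by_cases hr : r ≤ a
  · have := (strictMono_pwLinear ha hb).monotone hr
    rw [pwLinear_self ha] at this
    simp only [pwLinear, if_pos hr] at this ⊢
    rw [if_pos this]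
    field_simp [ha.1.ne', hb.1.ne']
  · have := strictMono_pwLinear ha hb (not_le.1 hr)
    rw [pwLinear_self ha] at this
    simp only [pwLinear, if_neg hr] at this ⊢
    rw [if_neg this.not_ge]
    field_simp
    ring

lemma pwLinear_mem_Ico (ha : a ∈ Ioo 0 1) (hb : b ∈ Ioo 0 1) {r : K} (hr : r ∈ Ico 0 1) :
    pwLinear a b r ∈ Ico 0 1 :=
  ⟨pwLinear_zero ha ▸ (strictMono_pwLinear ha hb).monotone hr.1,
    pwLinear_one ha ▸ strictMono_pwLinear ha hb hr.2⟩

variable [FloorRing K]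

def circlePwLinear (a b r : K) : K := ⌊r⌋ + pwLinear a b (Int.fract r)

lemma isDegreeOneLift_circlePwLinear : IsDegreeOneLift (circlePwLinear a b) := fun r n => by
  simp only [circlePwLinear, Int.floor_add_intCast, Int.fract_add_intCast]
  push_cast
  ring

lemma circlePwLinear_of_mem_Ico {r : K} (hr : r ∈ Ico 0 1) :
    circlePwLinear a b r = pwLinear a b r := by
  simp [circlePwLinear, Int.floor_eq_zero_iff.2 hr, Int.fract_eq_self.2 hr]

lemma strictMono_circlePwLinear (ha : a ∈ Ioo 0 1) (hb : b ∈ Ioo 0 1) :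
    StrictMono (circlePwLinear a b) := by
  intro r s hrs
  have hmem (t : K) := pwLinear_mem_Ico ha hb ⟨Int.fract_nonneg t, Int.fract_lt_one t⟩
  rcases (Int.floor_mono hrs.le).eq_or_lt with h | h
  · have : Int.fract r < Int.fract s := by
      rw [Int.fract, Int.fract, h]; exact sub_lt_sub_right hrs _
    simp only [circlePwLinear, h]
    exact (add_lt_add_iff_left _).2 (strictMono_pwLinear ha hb this)
  · have : (⌊r⌋ : K) + 1 ≤ ⌊s⌋ := by exact_mod_cast h
    simp only [circlePwLinear]
    linarith [(hmem r).2, (hmem s).1]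

lemma circlePwLinear_circlePwLinear (ha : a ∈ Ioo 0 1) (hb : b ∈ Ioo 0 1) (r : K) :
    circlePwLinear b a (circlePwLinear a b r) = r := by
  have hmem := pwLinear_mem_Ico ha hb ⟨Int.fract_nonneg r, Int.fract_lt_one r⟩
  show circlePwLinear b a (⌊r⌋ + pwLinear a b (Int.fract r)) = r
  rw [add_comm, isDegreeOneLift_circlePwLinear, circlePwLinear_of_mem_Ico hmem,
    pwLinear_pwLinear ha hb, Int.fract_add_floor]

def circlePwLinearIso (ha : a ∈ Ioo 0 1) (hb : b ∈ Ioo 0 1) : K ≃o K :=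
  (strictMono_circlePwLinear ha hb).orderIsoOfRightInverse _ (circlePwLinear b a)
    (circlePwLinear_circlePwLinear hb ha)

lemma coe_circlePwLinearIso (ha : a ∈ Ioo 0 1) (hb : b ∈ Ioo 0 1) :
    ⇑(circlePwLinearIso ha hb) = circlePwLinear a b :=
  rfl

lemma exists_orderIso_isDegreeOneLift {x y p q : K} (hxy : x < y) (hyx : y < x + 1)
    (hpq : p < q) (hqp : q < p + 1) :
    ∃ φ : K ≃o K, IsDegreeOneLift φ ∧ φ x = p ∧ φ y = q := by
  have ha : y - x ∈ Ioo 0 1 := ⟨sub_pos.2 hxy, by linarith⟩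
  have hb : q - p ∈ Ioo 0 1 := ⟨sub_pos.2 hpq, by linarith⟩
  refine ⟨((OrderIso.addRight (-x)).trans (circlePwLinearIso ha hb)).trans (OrderIso.addRight p),
    fun r n => ?_, ?_, ?_⟩
  · simp only [OrderIso.trans_apply, OrderIso.addRight_apply, coe_circlePwLinearIso]
    rw [add_right_comm, isDegreeOneLift_circlePwLinear, add_right_comm]
  · simp [coe_circlePwLinearIso, circlePwLinear_of_mem_Ico (left_mem_Ico.2 one_pos),
      pwLinear_zero ha]
  · simp [coe_circlePwLinearIso, ← sub_eq_add_neg,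
      circlePwLinear_of_mem_Ico (Ioo_subset_Ico_self ha), pwLinear_self ha]

end PiecewiseLinear

lemma exists_mem_Ico_circlePoint_eq {z : ℂ} (hz : z ∈ Q1) :
    ∃ q : ℚ, q ∈ Ico 0 1 ∧ circlePoint q = z := by
  obtain ⟨q, rfl⟩ := mem_Q1_iff.1 hz
  exact ⟨Int.fract q, ⟨Int.fract_nonneg q, Int.fract_lt_one q⟩, circlePoint_ratCast_fract q⟩

lemma ChordQ.exists_eq_mk (C : ChordQ) :
    ∃ x y : ℚ, 0 ≤ x ∧ x < y ∧ y < 1 ∧ C.1 = s(circlePoint x, circlePoint y) := by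
  obtain ⟨p, hQ, hD⟩ := C
  induction p using Sym2.ind with
  | _ z₁ z₂ =>
  obtain ⟨x, hx, rfl⟩ := exists_mem_Ico_circlePoint_eq (hQ z₁ (Sym2.mem_mk_left _ _))
  obtain ⟨y, hy, rfl⟩ := exists_mem_Ico_circlePoint_eq (hQ z₂ (Sym2.mem_mk_right _ _))
  have hxy : x ≠ y := by rintro rfl; exact hD (Sym2.mk_isDiag_iff.2 rfl)
  rcases hxy.lt_or_gt with h | h
  · exact ⟨x, y, hx.1, h, hy.2, rfl⟩
  · exact ⟨y, x, hy.1, h, hx.2, Sym2.eq_swap⟩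

def chordEquiv (f : ℂ ≃ ℂ) (hf : ∀ z, f z ∈ Q1 ↔ z ∈ Q1) : ChordQ ≃ ChordQ :=
  Equiv.subtypeEquiv
    { toFun := Sym2.map f
      invFun := Sym2.map f.symm
      left_inv := fun p => by simp [Sym2.map_map]
      right_inv := fun p => by simp [Sym2.map_map] }
    fun p => by simp [Sym2.mem_map, hf, Sym2.isDiag_map f.injective]

def circleGraphIso (f : ℂ ≃ ℂ) (hf : ∀ z, f z ∈ Q1 ↔ z ∈ Q1)
    (hseg : ∀ C D : ChordQ, (chordSegment (C.1.map f) ∩ chordSegment (D.1.map f)).Nonempty ↔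
      (chordSegment C.1 ∩ chordSegment D.1).Nonempty) :
    RationalCircleGraph ≃g RationalCircleGraph where
  toEquiv := chordEquiv f hf
  map_rel_iff' {C D} := and_congr (chordEquiv f hf).injective.ne_iff (hseg C D)

section Lift

open Classical in
/-- When `IsDegreeOneLift φ`, this is `circlePoint q ↦ circlePoint (φ q)` on `Q1`
(`liftMap_circlePoint`), and the identity off `Q1`. -/
def liftMap (φ : ℚ → ℚ) (z : ℂ) : ℂ :=
  if h : ∃ q : ℚ, circlePoint q = z then circlePoint (φ h.choose) else z

variable {φ : ℚ ≃o ℚ}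

lemma liftMap_circlePoint (hφ : IsDegreeOneLift φ) (q : ℚ) :
    liftMap φ (circlePoint q) = circlePoint (φ q) := by
  have h : ∃ p : ℚ, circlePoint p = circlePoint q := ⟨q, rfl⟩
  obtain ⟨n, hn⟩ := circlePoint_eq_circlePoint_iff.1 h.choose_spec
  rw [liftMap, dif_pos h, show h.choose = q + n by exact_mod_cast hn, hφ]
  push_cast
  exact circlePoint_add_intCast _ n

lemma liftMap_of_notMem {z : ℂ} (hz : z ∉ Q1) : liftMap φ z = z :=
  dif_neg (mem_Q1_iff.not.1 hz)

lemma IsDegreeOneLift.symm (hφ : IsDegreeOneLift φ) : IsDegreeOneLift φ.symm := fun r n =>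
  φ.symm_apply_eq.2 (by rw [hφ, φ.apply_symm_apply])

lemma liftMap_symm_liftMap (hφ : IsDegreeOneLift φ) (z : ℂ) :
    liftMap φ.symm (liftMap φ z) = z := by
  by_cases hz : z ∈ Q1
  · obtain ⟨q, rfl⟩ := mem_Q1_iff.1 hz
    rw [liftMap_circlePoint hφ, liftMap_circlePoint hφ.symm, φ.symm_apply_apply]
  · rw [liftMap_of_notMem hz, liftMap_of_notMem hz]

lemma liftMap_mem_Q1_iff (hφ : IsDegreeOneLift φ) (z : ℂ) :
    liftMap φ z ∈ Q1 ↔ z ∈ Q1 := by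
  by_cases hz : z ∈ Q1
  · obtain ⟨q, rfl⟩ := mem_Q1_iff.1 hz
    rw [liftMap_circlePoint hφ]
    exact iff_of_true (mem_Q1_iff.2 ⟨_, rfl⟩) hz
  · rw [liftMap_of_notMem hz]

def liftEquiv (hφ : IsDegreeOneLift φ) : ℂ ≃ ℂ where
  toFun := liftMap φ
  invFun := liftMap φ.symm
  left_inv := liftMap_symm_liftMap hφ
  right_inv := liftMap_symm_liftMap (φ := φ.symm) hφ.symm

lemma segment_liftMap_inter_nonempty_iff (hφ : IsDegreeOneLift φ) {x y s t : ℚ}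
    (hx : x ∈ Ico 0 1) (hy : y ∈ Ico 0 1) (hs : s ∈ Ico 0 1) (ht : t ∈ Ico 0 1)
    (hxy : x ≠ y) (hst : s ≠ t) :
    (segment ℝ (liftMap φ (circlePoint x)) (liftMap φ (circlePoint y)) ∩
      segment ℝ (liftMap φ (circlePoint s)) (liftMap φ (circlePoint t))).Nonempty ↔
    (segment ℝ (circlePoint x) (circlePoint y) ∩
      segment ℝ (circlePoint s) (circlePoint t)).Nonempty := by
  have hcast {r : ℚ} (hr : r ∈ Ico 0 1) : (r : ℝ) ∈ Ico 0 (0 + 1) := by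
    rw [zero_add]; exact ⟨by exact_mod_cast hr.1, by exact_mod_cast hr.2⟩
  have himage {r : ℚ} (hr : r ∈ Ico 0 1) : (φ r : ℝ) ∈ Ico (φ 0 : ℝ) (φ 0 + 1) := by
    have h1 : φ 1 = φ 0 + 1 := by simpa using hφ 0 1
    exact ⟨by exact_mod_cast φ.monotone hr.1, by exact_mod_cast h1 ▸ φ.strictMono hr.2⟩
  simp only [liftMap_circlePoint hφ]
  rw [segment_circlePoint_inter_nonempty_iff (himage hx) (himage hy) (himage hs) (himage ht)
      (by exact_mod_cast φ.injective.ne hxy) (by exact_mod_cast φ.injective.ne hst),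
    segment_circlePoint_inter_nonempty_iff (hcast hx) (hcast hy) (hcast hs) (hcast ht)
      (by exact_mod_cast hxy) (by exact_mod_cast hst)]
  exact (Rat.cast_strictMono.comp φ.strictMono).interlaced_iff.trans
    Rat.cast_strictMono.interlaced_iff.symm

def liftAut (hφ : IsDegreeOneLift φ) : RationalCircleGraph ≃g RationalCircleGraph :=
  circleGraphIso (liftEquiv hφ) (liftMap_mem_Q1_iff hφ) fun C D => by
    obtain ⟨x, y, hx, hxy, hy, hC⟩ := C.exists_eq_mk
    obtain ⟨s, t, hs, hst, ht, hD⟩ := D.exists_eq_mk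
    rw [hC, hD]
    exact segment_liftMap_inter_nonempty_iff hφ ⟨hx, hxy.trans hy⟩ ⟨hx.trans hxy.le, hy⟩
      ⟨hs, hst.trans ht⟩ ⟨hs.trans hst.le, ht⟩ hxy.ne hst.ne

lemma liftAut_apply_coe (hφ : IsDegreeOneLift φ) (C : ChordQ) :
    (liftAut hφ C).1 = C.1.map (liftMap φ) :=
  rfl

end Lift

/-- The rational circle graph is vertex-transitive. -/
theorem rationalCircleGraph_vertexTransitive (u v : ChordQ) :
    ∃ h : RationalCircleGraph ≃g RationalCircleGraph, h u = v := by
  obtain ⟨x, y, hx, hxy, hy, hu⟩ := u.exists_eq_mk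
  obtain ⟨p, q, hp, hpq, hq, hv⟩ := v.exists_eq_mk
  obtain ⟨φ, hφ, rfl, rfl⟩ :=
    exists_orderIso_isDegreeOneLift hxy (by linarith) hpq (by linarith)
  refine ⟨liftAut hφ, Subtype.ext ?_⟩
  rw [liftAut_apply_coe, hu, hv, Sym2.map_mk, liftMap_circlePoint hφ, liftMap_circlePoint hφ]

end
end

section
/- Two chords of S¹ with all four endpoints distinct intersect if and only if their endpoint pairs interleave on the circle: the chord with endpoints c,d intersects the chord with endpoints a,b if and only if c and d lie in different connected components of S¹ \ {a,b}. -/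
noncomputable section

/-!
Let `lineSide a b z` be the cross product of `b - a` and `z - a`, an affine function of `z` whose
sign tells on which side of the line `ab` the point `z` lies. For `‖a‖ = ‖b‖` one has
`‖a + s (b - a)‖² = ‖a‖² - s (1 - s) ‖b - a‖²`, so the points of the line `ab` in the closed disc
are exactly those of the chord `[a, b]`. Hence the chord `[c, d]` meets `[a, b]` iff it meets the
line, iff `lineSide a b` changes sign between `c` and `d`.

On the circle, `lineSide a b` vanishes only at `a` and `b`. Writing `a = e^{iα}`, `b = e^{iβ}`
with `α < β < α + 2π`, the product-of-sines formula for `lineSide` shows that it is negative exactly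
on the arc `e^{i(α, β)}` and positive exactly on the complementary open arc. Both arcs are
connected, so the sign of `lineSide a b` is what distinguishes the two components of
`S¹ \ {a, b}`.
-/

open Complex ComplexConjugate AffineMap Set Real

def lineSide (a b : ℂ) : ℂ →ᵃ[ℝ] ℝ where
  toFun z := ((z - a) * conj (b - a)).im
  linear := imLm ∘ₗ LinearMap.mulRight ℝ (conj (b - a))
  map_vadd' p v := by simp; ring

lemma lineSide_apply (a b z : ℂ) :
    lineSide a b z = (z.im - a.im) * (b.re - a.re) - (z.re - a.re) * (b.im - a.im) := by
  simp [lineSide]; ring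

@[simp] lemma lineSide_left (a b : ℂ) : lineSide a b a = 0 := by simp [lineSide_apply]

@[simp] lemma lineSide_right (a b : ℂ) : lineSide a b b = 0 := by simp [lineSide_apply]; ring

lemma lineSide_swap (a b z : ℂ) : lineSide b a z = -lineSide a b z := by
  simp only [lineSide_apply]; ring

lemma exists_lineMap_eq_of_lineSide_eq_zero {a b p : ℂ} (hab : a ≠ b)
    (h : lineSide a b p = 0) : ∃ s : ℝ, lineMap a b s = p := by
  have hn : (b.re - a.re) ^ 2 + (b.im - a.im) ^ 2 ≠ 0 := by
    intro h0
    apply hab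
    apply Complex.ext <;> nlinarith [sq_nonneg (b.re - a.re), sq_nonneg (b.im - a.im)]
  rw [lineSide_apply] at h
  refine ⟨((p.re - a.re) * (b.re - a.re) + (p.im - a.im) * (b.im - a.im)) /
    ((b.re - a.re) ^ 2 + (b.im - a.im) ^ 2), ?_⟩
  apply Complex.ext <;>
    simp only [lineMap_apply_module', add_re, add_im, smul_re, smul_im, sub_re, sub_im,
      smul_eq_mul] <;> field_simp
  · linear_combination (b.im - a.im) * h
  · linear_combination -(b.re - a.re) * h

theorem norm_lineMap_sq_of_norm_eq {E : Type*} [NormedAddCommGroup E] [InnerProductSpace ℝ E]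
    {a b : E} (h : ‖a‖ = ‖b‖) (s : ℝ) :
    ‖lineMap a b s‖ ^ 2 = ‖a‖ ^ 2 - s * (1 - s) * ‖b - a‖ ^ 2 := by
  have hb : ‖b‖ ^ 2 = ‖a‖ ^ 2 + 2 * inner ℝ a (b - a) + ‖b - a‖ ^ 2 := by
    rw [← norm_add_sq_real, add_sub_cancel]
  rw [← h] at hb
  rw [lineMap_apply_module', add_comm, norm_add_sq_real, inner_smul_right, norm_smul,
    Real.norm_eq_abs, mul_pow, sq_abs]
  linear_combination (-s) * hb

theorem mem_segment_of_lineSide_eq_zero {a b p : ℂ} (hab : a ≠ b) (hb : ‖b‖ = ‖a‖)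
    (hp : ‖p‖ ≤ ‖a‖) (h : lineSide a b p = 0) : p ∈ segment ℝ a b := by
  obtain ⟨s, rfl⟩ := exists_lineMap_eq_of_lineSide_eq_zero hab h
  have hnorm := norm_lineMap_sq_of_norm_eq hb.symm s
  have hba : 0 < ‖b - a‖ ^ 2 := pow_pos (norm_pos_iff.2 (sub_ne_zero.2 hab.symm)) 2
  have hs : 0 ≤ s * (1 - s) := by
    nlinarith [pow_le_pow_left₀ (norm_nonneg _) hp 2]
  rw [segment_eq_image_lineMap]
  exact ⟨s, ⟨by nlinarith, by nlinarith⟩, rfl⟩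

theorem lineSide_eq_zero_iff {a b z : ℂ} (hab : a ≠ b) (ha : ‖a‖ = ‖z‖) (hb : ‖b‖ = ‖z‖) :
    lineSide a b z = 0 ↔ z = a ∨ z = b := by
  refine ⟨fun h ↦ ?_, by rintro (rfl | rfl) <;> simp⟩
  obtain ⟨s, rfl⟩ := exists_lineMap_eq_of_lineSide_eq_zero hab h
  have hnorm := norm_lineMap_sq_of_norm_eq (ha.trans hb.symm) s
  have hba : ‖b - a‖ ^ 2 ≠ 0 := by simpa [sub_eq_zero] using hab.symm
  have hs : s * (1 - s) = 0 := by
    rw [← ha] at hnorm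
    exact (mul_eq_zero.1 (by linarith)).resolve_right hba
  rcases mul_eq_zero.1 hs with rfl | hs1
  · simp
  · simp [show s = 1 by linarith]

theorem segment_inter_segment_nonempty_iff_lineSide_mul_nonpos {a b c d : ℂ} (hab : a ≠ b)
    (hb : ‖b‖ = ‖a‖) (hc : ‖c‖ ≤ ‖a‖) (hd : ‖d‖ ≤ ‖a‖) :
    (segment ℝ a b ∩ segment ℝ c d).Nonempty ↔ lineSide a b c * lineSide a b d ≤ 0 := by
  have hcd : segment ℝ c d ⊆ Metric.closedBall 0 ‖a‖ :=
    (convex_closedBall 0 ‖a‖).segment_subset (by simpa using hc) (by simpa using hd)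
  trans (0 : ℝ) ∈ lineSide a b '' segment ℝ c d
  · constructor
    · rintro ⟨p, hpab, hpcd⟩
      refine ⟨p, hpcd, ?_⟩
      have := mem_image_of_mem (lineSide a b) hpab
      rwa [image_segment, lineSide_left, lineSide_right, segment_same] at this
    · rintro ⟨p, hpcd, hp⟩
      exact ⟨p, mem_segment_of_lineSide_eq_zero hab hb (by simpa using hcd hpcd) hp, hpcd⟩
  · rw [image_segment, segment_eq_uIcc, mem_uIcc, mul_nonpos_iff, or_comm,
      and_comm (a := _ ≤ 0)]

theorem connectedComponentIn_eq_iff_mul_pos {X : Type*} [TopologicalSpace X] {f : X → ℝ}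
    (hf : Continuous f) (hneg : IsPreconnected {x | f x < 0})
    (hpos : IsPreconnected {x | 0 < f x})
    {x y : X} (hx : f x ≠ 0) (hy : f y ≠ 0) :
    connectedComponentIn {x | f x ≠ 0} x = connectedComponentIn {x | f x ≠ 0} y ↔
      0 < f x * f y := by
  constructor
  · intro h
    by_contra hxy
    set K := connectedComponentIn {x | f x ≠ 0} x
    have hK : IsPreconnected K := isPreconnected_connectedComponentIn
    have hxK : x ∈ K := mem_connectedComponentIn hx
    have hyK : y ∈ K := h ▸ mem_connectedComponentIn hy
    obtain ⟨z, hzK, hz⟩ : (0 : ℝ) ∈ f '' K := by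
      rcases mul_nonpos_iff.1 (not_lt.1 hxy) with ⟨hx0, hy0⟩ | ⟨hx0, hy0⟩
      · exact hK.intermediate_value hyK hxK hf.continuousOn ⟨hy0, hx0⟩
      · exact hK.intermediate_value hxK hyK hf.continuousOn ⟨hx0, hy0⟩
    exact connectedComponentIn_subset _ _ hzK hz
  · intro hxy
    suffices ∃ s, IsPreconnected s ∧ s ⊆ {x | f x ≠ 0} ∧ x ∈ s ∧ y ∈ s by
      obtain ⟨s, hs, hsU, hxs, hys⟩ := this
      exact connectedComponentIn_eq (hs.subset_connectedComponentIn hxs hsU hys)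
    rcases pos_and_pos_or_neg_and_neg_of_mul_pos hxy with ⟨hx', hy'⟩ | ⟨hx', hy'⟩
    · exact ⟨_, hpos, fun z hz ↦ ne_of_gt hz, hx', hy'⟩
    · exact ⟨_, hneg, fun z hz ↦ ne_of_lt hz, hx', hy'⟩

lemma compl_pair_eq_setOf_lineSide_ne_zero {a b : S1} (hab : a ≠ b) :
    ({a, b}ᶜ : Set S1) = {z : S1 | lineSide a b z ≠ 0} := by
  ext z
  simp [lineSide_eq_zero_iff (Subtype.coe_injective.ne hab) (a.2.trans z.2.symm)
    (b.2.trans z.2.symm), Subtype.ext_iff]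

def expS1 (θ : ℝ) : S1 := ⟨cexp (θ * I), norm_exp_ofReal_mul_I θ⟩

lemma continuous_expS1 : Continuous expS1 := by
  unfold expS1; fun_prop

lemma exists_mem_Ico_expS1_eq (z : S1) (α : ℝ) : ∃ θ ∈ Ico α (α + 2 * π), expS1 θ = z := by
  have hper : Function.Periodic (fun θ : ℝ ↦ cexp (θ * I)) (2 * π) := fun θ ↦ by
    simpa using exp_mul_I_periodic θ
  obtain ⟨θ, hθ, h⟩ := hper.exists_mem_Ico Real.two_pi_pos (arg z) α
  refine ⟨θ, hθ, Subtype.ext ?_⟩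
  have hz := norm_mul_exp_arg_mul_I (z : ℂ)
  rw [show ‖(z : ℂ)‖ = 1 from z.2, ofReal_one, one_mul] at hz
  exact h.symm.trans hz

lemma lineSide_exp (α β θ : ℝ) :
    lineSide (cexp (α * I)) (cexp (β * I)) (cexp (θ * I)) =
      4 * Real.sin ((β - α) / 2) * Real.sin ((θ - α) / 2) * Real.sin ((θ - β) / 2) := by
  rw [lineSide_apply]
  simp only [exp_ofReal_mul_I_re, exp_ofReal_mul_I_im, Real.sin_sub_sin, Real.cos_sub_cos]
  rw [show (θ - β) / 2 = (θ + α) / 2 - (β + α) / 2 by ring, Real.sin_sub]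
  ring

lemma lineSide_exp_neg {α β θ : ℝ} (hβ : β < α + 2 * π) (hθ : θ ∈ Ioo α β) :
    lineSide (cexp (α * I)) (cexp (β * I)) (cexp (θ * I)) < 0 := by
  obtain ⟨hαθ, hθβ⟩ := hθ
  rw [lineSide_exp]
  have h₁ : 0 < Real.sin ((β - α) / 2) := sin_pos_of_pos_of_lt_pi (by linarith) (by linarith)
  have h₂ : 0 < Real.sin ((θ - α) / 2) := sin_pos_of_pos_of_lt_pi (by linarith) (by linarith)
  have h₃ : Real.sin ((θ - β) / 2) < 0 := sin_neg_of_neg_of_neg_pi_lt (by linarith) (by linarith)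
  exact mul_neg_of_pos_of_neg (by positivity) h₃

lemma lineSide_exp_pos {α β θ : ℝ} (hαβ : α < β) (hθ : θ ∈ Ioo β (α + 2 * π)) :
    0 < lineSide (cexp (α * I)) (cexp (β * I)) (cexp (θ * I)) := by
  obtain ⟨hβθ, hθα⟩ := hθ
  rw [lineSide_exp]
  have h₁ : 0 < Real.sin ((β - α) / 2) := sin_pos_of_pos_of_lt_pi (by linarith) (by linarith)
  have h₂ : 0 < Real.sin ((θ - α) / 2) := sin_pos_of_pos_of_lt_pi (by linarith) (by linarith)
  have h₃ : 0 < Real.sin ((θ - β) / 2) := sin_pos_of_pos_of_lt_pi (by linarith) (by linarith)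
  positivity

lemma exists_expS1_eq_of_ne {a b : S1} (hab : a ≠ b) :
    ∃ α β, α < β ∧ β < α + 2 * π ∧ expS1 α = a ∧ expS1 β = b := by
  obtain ⟨α, -, rfl⟩ := exists_mem_Ico_expS1_eq a 0
  obtain ⟨β, ⟨hαβ, hβ⟩, rfl⟩ := exists_mem_Ico_expS1_eq b α
  exact ⟨α, β, hαβ.lt_of_ne (by rintro rfl; exact hab rfl), hβ, rfl, rfl⟩

theorem isPreconnected_setOf_lineSide_neg {a b : S1} (hab : a ≠ b) :
    IsPreconnected {z : S1 | lineSide a b z < 0} := by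
  obtain ⟨α, β, hαβ, hβ, rfl, rfl⟩ := exists_expS1_eq_of_ne hab
  suffices {z : S1 | lineSide (expS1 α) (expS1 β) z < 0} = expS1 '' Ioo α β by
    rw [this]
    exact isPreconnected_Ioo.image _ continuous_expS1.continuousOn
  ext z
  obtain ⟨θ, ⟨hαθ, hθ⟩, rfl⟩ := exists_mem_Ico_expS1_eq z α
  refine ⟨fun h ↦ ⟨θ, ?_, rfl⟩, ?_⟩
  · rcases hαθ.eq_or_lt with rfl | hαθ
    · exact (h.ne (lineSide_left _ _)).elim
    rcases lt_or_ge θ β with hθβ | hβθ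
    · exact ⟨hαθ, hθβ⟩
    rcases hβθ.eq_or_lt with rfl | hβθ
    · exact (h.ne (lineSide_right _ _)).elim
    · exact absurd h (lineSide_exp_pos hαβ ⟨hβθ, hθ⟩).not_gt
  · rintro ⟨θ', hθ', h⟩
    exact h ▸ lineSide_exp_neg hβ hθ'

theorem isPreconnected_setOf_lineSide_pos {a b : S1} (hab : a ≠ b) :
    IsPreconnected {z : S1 | 0 < lineSide a b z} := by
  simpa only [lineSide_swap (a : ℂ) b, neg_lt_zero] using
    isPreconnected_setOf_lineSide_neg hab.symm

theorem chords_intersect_iff_interleaved_general (a b c d : S1)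
    (hab : a ≠ b) (hac : a ≠ c) (had : a ≠ d) (hbc : b ≠ c) (hbd : b ≠ d) :
    (segment ℝ (a : ℂ) (b : ℂ) ∩ segment ℝ (c : ℂ) (d : ℂ)).Nonempty ↔
      connectedComponentIn ({a, b}ᶜ : Set S1) c ≠
        connectedComponentIn ({a, b}ᶜ : Set S1) d := by
  have hU := compl_pair_eq_setOf_lineSide_ne_zero hab
  have hc : c ∈ ({a, b}ᶜ : Set S1) := by simp [hac.symm, hbc.symm]
  have hd : d ∈ ({a, b}ᶜ : Set S1) := by simp [had.symm, hbd.symm]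
  rw [hU] at hc hd
  have hside : Continuous fun z : S1 ↦ lineSide a b z :=
    (lineSide a b).continuous_of_finiteDimensional.comp continuous_subtype_val
  rw [segment_inter_segment_nonempty_iff_lineSide_mul_nonpos (Subtype.coe_injective.ne hab)
      (b.2.trans a.2.symm) (c.2.trans a.2.symm).le (d.2.trans a.2.symm).le, hU, ne_eq,
    connectedComponentIn_eq_iff_mul_pos hside (isPreconnected_setOf_lineSide_neg hab)
      (isPreconnected_setOf_lineSide_pos hab) hc hd, not_lt]

/-- Two chords with four pairwise distinct endpoints intersect iff
their endpoints interleave on the circle, i.e. iff `c` and `d` lie in different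
connected components of `S¹ \ {a, b}`. -/
theorem chords_intersect_iff_interleaved (a b c d : S1)
    (hab : a ≠ b) (hcd : c ≠ d) (hac : a ≠ c) (had : a ≠ d) (hbc : b ≠ c) (hbd : b ≠ d) :
    (segment ℝ (a : ℂ) (b : ℂ) ∩ segment ℝ (c : ℂ) (d : ℂ)).Nonempty ↔
      connectedComponentIn ({a, b}ᶜ : Set S1) c ≠
        connectedComponentIn ({a, b}ᶜ : Set S1) d :=
  chords_intersect_iff_interleaved_general a b c d hab hac had hbc hbd
end
end
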